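/- arXiv:1005.1256 — 3 statements merged into one kernel-verified Lean document; each statement's English description precedes it below -/
import Mathlib

section
/- Let G be a bipartite graph on {x_1,...,x_n} ∪ {y_1,...,y_n} satisfying conditions (a) and (b). Define L_G = { α ⊆ {p_1,...,p_n} : there exists a minimal vertex cover C of G such that p_k ∈ α ⇔ x_k ∈ C }. Then ∅ ∈ L_G and {p_1,...,p_n} ∈ L_G, and L_G is closed under union and intersection (i.e., L_G is a sublattice of the Boolean lattice on {p_1,...,p_n}). -/
/-- `C` is a vertex cover of the subgraph of the bipartite graph with
edge relation `E` (edges `{x i, y j}` for `E i j`) induced on the vertices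
`{x i, y i : i ∈ F}`. -/
def IsCoverOn (n : ℕ) (E : Fin n → Fin n → Prop) (F : Set (Fin n))
    (C : Set (Fin n ⊕ Fin n)) : Prop :=
  (∀ v ∈ C, Sum.elim (· ∈ F) (· ∈ F) v) ∧
  (∀ i ∈ F, ∀ j ∈ F, E i j → Sum.inl i ∈ C ∨ Sum.inr j ∈ C)

/-- `C` is a minimal vertex cover of the induced subgraph on `F`. -/
def IsMinCoverOn (n : ℕ) (E : Fin n → Fin n → Prop) (F : Set (Fin n))
    (C : Set (Fin n ⊕ Fin n)) : Prop :=
  IsCoverOn n E F C ∧ ∀ D ⊂ C, ¬ IsCoverOn n E F D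

/-- The vertex set `{x k : k ∈ α} ∪ {y k : k ∈ F \ α}` attached to `α ⊆ F`. -/
def coverSetOn (n : ℕ) (F α : Set (Fin n)) : Set (Fin n ⊕ Fin n) :=
  (Sum.inl '' α) ∪ (Sum.inr '' (F \ α))

/-- The lattice `L_{G_F}` of the induced subgraph `G_F`: those `α ⊆ F` whose
associated vertex set is a minimal vertex cover of `G_F`. -/
def LGF (n : ℕ) (E : Fin n → Fin n → Prop) (F : Set (Fin n)) : Set (Set (Fin n)) :=
  {α | α ⊆ F ∧ IsMinCoverOn n E F (coverSetOn n F α)}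

/-!
The minimal vertex covers are exactly the sets `{x k : k ∈ α} ∪ {y k : k ∉ α}` with `α` closed
under `E`-predecessors (`E i j` and `j ∈ α` imply `i ∈ α`), and such sets obviously form a
sublattice. Such a set is a cover, and it is minimal because of the edges `{x k, y k}`. Conversely,
a minimal cover never contains both `x j` and `y j`: minimality gives private edges `{x j, y k}` and
`{x i, y j}` with `x i, y k ∉ C`, and then `{x i, y k}` is an edge (condition (b), or (a) when
`i = k`) that `C` misses. Hence its `x`-part is closed, since any edge `{x i, y j}` with `x j ∈ C`
must be covered by `x i`.
-/

def IsEdgeClosed {ι : Type*} (E : ι → ι → Prop) (α : Set ι) : Prop :=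
  ∀ ⦃i j⦄, E i j → j ∈ α → i ∈ α

namespace IsEdgeClosed

variable {ι : Type*} {E : ι → ι → Prop} {α β : Set ι}

theorem empty : IsEdgeClosed E ∅ := fun _ _ _ hj => hj

theorem univ : IsEdgeClosed E Set.univ := fun _ _ _ _ => trivial

theorem union (hα : IsEdgeClosed E α) (hβ : IsEdgeClosed E β) : IsEdgeClosed E (α ∪ β) :=
  fun _ _ hij => Or.imp (hα hij) (hβ hij)

theorem inter (hα : IsEdgeClosed E α) (hβ : IsEdgeClosed E β) : IsEdgeClosed E (α ∩ β) :=
  fun _ _ hij => And.imp (hα hij) (hβ hij)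

end IsEdgeClosed

section MinCover

variable {n : ℕ} {E : Fin n → Fin n → Prop}

@[simp]
theorem inl_mem_coverSetOn_univ {α : Set (Fin n)} {k : Fin n} :
    Sum.inl k ∈ coverSetOn n Set.univ α ↔ k ∈ α := by
  simp [coverSetOn]

@[simp]
theorem inr_mem_coverSetOn_univ {α : Set (Fin n)} {k : Fin n} :
    Sum.inr k ∈ coverSetOn n Set.univ α ↔ k ∉ α := by
  simp [coverSetOn]

theorem isCoverOn_univ_iff {C : Set (Fin n ⊕ Fin n)} :
    IsCoverOn n E Set.univ C ↔ ∀ i j, E i j → Sum.inl i ∈ C ∨ Sum.inr j ∈ C := by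
  simp only [IsCoverOn, Set.mem_univ, forall_const, and_iff_right_iff_imp]
  rintro - (_ | _) _ <;> trivial

theorem isMinCoverOn_coverSetOn_univ (ha : ∀ i, E i i) {α : Set (Fin n)}
    (hα : IsEdgeClosed E α) : IsMinCoverOn n E Set.univ (coverSetOn n Set.univ α) := by
  refine ⟨isCoverOn_univ_iff.2 fun i j hij => ?_, fun D hD hDcov => ?_⟩
  · by_cases hj : j ∈ α
    · exact Or.inl (inl_mem_coverSetOn_univ.2 (hα hij hj))
    · exact Or.inr (inr_mem_coverSetOn_univ.2 hj)
  · obtain ⟨v, hvC, hvD⟩ := Set.exists_of_ssubset hD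
    obtain ⟨k, rfl | rfl⟩ : ∃ k, v = Sum.inl k ∨ v = Sum.inr k := by cases v <;> simp
    · have := (isCoverOn_univ_iff.1 hDcov k k (ha k)).resolve_left hvD
      exact inr_mem_coverSetOn_univ.1 (hD.1 this) (inl_mem_coverSetOn_univ.1 hvC)
    · have := (isCoverOn_univ_iff.1 hDcov k k (ha k)).resolve_right hvD
      exact inr_mem_coverSetOn_univ.1 hvC (inl_mem_coverSetOn_univ.1 (hD.1 this))

namespace IsMinCoverOn

variable {C : Set (Fin n ⊕ Fin n)}

theorem exists_inr_notMem_of_inl_mem (hC : IsMinCoverOn n E Set.univ C) {j : Fin n}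
    (hj : Sum.inl j ∈ C) : ∃ k, E j k ∧ Sum.inr k ∉ C := by
  have hnot := hC.2 _ (Set.sdiff_singleton_ssubset.2 hj)
  simp only [isCoverOn_univ_iff, not_forall, not_or] at hnot
  obtain ⟨i, k, hik, hi, hk⟩ := hnot
  have hkC : Sum.inr k ∉ C := fun h => hk ⟨h, by simp⟩
  obtain rfl : i = j := by
    by_contra hne
    exact hi ⟨(isCoverOn_univ_iff.1 hC.1 i k hik).resolve_right hkC, by simpa using hne⟩
  exact ⟨k, hik, hkC⟩

theorem exists_inl_notMem_of_inr_mem (hC : IsMinCoverOn n E Set.univ C) {j : Fin n}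
    (hj : Sum.inr j ∈ C) : ∃ i, E i j ∧ Sum.inl i ∉ C := by
  have hnot := hC.2 _ (Set.sdiff_singleton_ssubset.2 hj)
  simp only [isCoverOn_univ_iff, not_forall, not_or] at hnot
  obtain ⟨i, k, hik, hi, hk⟩ := hnot
  have hiC : Sum.inl i ∉ C := fun h => hi ⟨h, by simp⟩
  obtain rfl : k = j := by
    by_contra hne
    exact hk ⟨(isCoverOn_univ_iff.1 hC.1 i k hik).resolve_left hiC, by simpa using hne⟩
  exact ⟨i, hik, hiC⟩

theorem not_inl_mem_and_inr_mem (ha : ∀ i, E i i)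
    (hb : ∀ i j k : Fin n, i ≠ j → j ≠ k → i ≠ k → E i j → E j k → E i k)
    (hC : IsMinCoverOn n E Set.univ C) (j : Fin n) :
    ¬ (Sum.inl j ∈ C ∧ Sum.inr j ∈ C) := by
  rintro ⟨hl, hr⟩
  obtain ⟨k, hjk, hk⟩ := hC.exists_inr_notMem_of_inl_mem hl
  obtain ⟨i, hij, hi⟩ := hC.exists_inl_notMem_of_inr_mem hr
  have hik : E i k := by
    by_cases h : i = k
    · exact h ▸ ha i
    · exact hb i j k (by rintro rfl; exact hi hl) (by rintro rfl; exact hk hr) h hij hjk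
  exact (isCoverOn_univ_iff.1 hC.1 i k hik).elim hi hk

theorem isEdgeClosed (ha : ∀ i, E i i)
    (hb : ∀ i j k : Fin n, i ≠ j → j ≠ k → i ≠ k → E i j → E j k → E i k)
    (hC : IsMinCoverOn n E Set.univ C) : IsEdgeClosed E {k | Sum.inl k ∈ C} :=
  fun i j hij hj => (isCoverOn_univ_iff.1 hC.1 i j hij).resolve_right
    fun hr => hC.not_inl_mem_and_inr_mem ha hb j ⟨hj, hr⟩

end IsMinCoverOn

end MinCover

/-- Herzog–Hibi: `L_G = {α : ∃ minimal vertex cover C of G with p k ∈ α ↔ x k ∈ C}`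
contains `∅` and `{p 1, ..., p n}` and is closed under union and
intersection, i.e. it is a sublattice of the Boolean lattice. -/
theorem stmt4 (n : ℕ) (E : Fin n → Fin n → Prop)
    (ha : ∀ i, E i i)
    (hb : ∀ i j k : Fin n, i ≠ j → j ≠ k → i ≠ k → E i j → E j k → E i k) :
    let LG : Set (Set (Fin n)) :=
      {α | ∃ C : Set (Fin n ⊕ Fin n), IsMinCoverOn n E Set.univ C ∧
        ∀ k : Fin n, k ∈ α ↔ Sum.inl k ∈ C}
    (∅ : Set (Fin n)) ∈ LG ∧ (Set.univ : Set (Fin n)) ∈ LG ∧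
    ∀ α ∈ LG, ∀ β ∈ LG, α ∪ β ∈ LG ∧ α ∩ β ∈ LG := by
  intro LG
  have hLG : LG = {α | IsEdgeClosed E α} := by
    ext α
    refine ⟨fun ⟨C, hC, hα⟩ => ?_, fun hα => ?_⟩
    · obtain rfl : α = {k | Sum.inl k ∈ C} := Set.ext hα
      exact hC.isEdgeClosed ha hb
    · exact ⟨_, isMinCoverOn_coverSetOn_univ ha hα, fun k => inl_mem_coverSetOn_univ.symm⟩
  rw [hLG]
  exact ⟨.empty, .univ, fun α hα β hβ => ⟨hα.union hβ, hα.inter hβ⟩⟩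
end

section
/- Let G be an unmixed bipartite graph on {x_1,...,x_n} ∪ {y_1,...,y_n} without isolated vertices (satisfying conditions (a) and (b)), and let L_G be its associated lattice of minimal vertex covers. Let F be a nonempty proper subset of [n], with complement F̄, and let L_{G_{F̄}} be the lattice associated to the induced subgraph G_{F̄}. For α ∈ L_{G_{F̄}}, let δ_α be the union of all γ ⊆ {p_i : i ∈ F} with α ∪ γ ∈ L_G. Let S be the set of all β ∈ L_G such that no set of the form β ∪ {p_i : i ∈ A} with ∅ ≠ A ⊆ F is an upper neighbour (cover) of β in L_G. Then the map φ : L_{G_{F̄}} → S given by φ(α) = α ∪ δ_α is an order isomorphism. -/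
/-- `β'` is an upper neighbour (cover) of `β` in the poset `L`. -/
def IsUpperNeighbour (n : ℕ) (L : Set (Set (Fin n))) (β β' : Set (Fin n)) : Prop :=
  β' ∈ L ∧ β ⊂ β' ∧ ∀ γ ∈ L, ¬ (β ⊂ γ ∧ γ ⊂ β')

/-!
Because of the loops `E i i`, minimality of the cover `coverSetOn n F α` is automatic, so `L_G` is
the family of sets closed downwards under the transitive relation `E`, and `L_{G_F̄}` is the family
of traces `β ∩ F̄` of such sets. As `L_G` is closed under unions, `α ∪ δ_α` is the largest element
of `L_G` with trace `α`. An element `β` of `L_G` is of this form exactly when it has no upper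
neighbour `β ∪ A` with `A ⊆ F`: otherwise a minimal element of `L_G` strictly between `β` and the
largest element with trace `β ∩ F̄` is such a neighbour.
-/

section DownClosed

variable {ι : Type*} {r : ι → ι → Prop}

variable (r) in
def IsDownClosed (s : Set ι) : Prop := ∀ ⦃i j⦄, r i j → j ∈ s → i ∈ s

lemma isDownClosed_sUnion {𝒮 : Set (Set ι)} (h : ∀ s ∈ 𝒮, IsDownClosed r s) :
    IsDownClosed r (⋃₀ 𝒮) := by
  rintro i j hij ⟨s, hs, hj⟩
  exact ⟨s, hs, h s hs hij hj⟩

lemma isTrans_of_refl_of_trans_of_ne (hrefl : ∀ i, r i i)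
    (htrans : ∀ i j k, i ≠ j → j ≠ k → i ≠ k → r i j → r j k → r i k) : IsTrans ι r := by
  refine ⟨fun i j k hij hjk => ?_⟩
  rcases eq_or_ne i j with rfl | hne₁
  · exact hjk
  rcases eq_or_ne j k with rfl | hne₂
  · exact hij
  rcases eq_or_ne i k with rfl | hne₃
  · exact hrefl i
  exact htrans i j k hne₁ hne₂ hne₃ hij hjk

end DownClosed

section VertexCover

variable {n : ℕ} {E : Fin n → Fin n → Prop} {F α : Set (Fin n)}

@[simp]
lemma inl_mem_coverSetOn {i : Fin n} : Sum.inl i ∈ coverSetOn n F α ↔ i ∈ α := by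
  simp [coverSetOn]

@[simp]
lemma inr_mem_coverSetOn {i : Fin n} : Sum.inr i ∈ coverSetOn n F α ↔ i ∈ F ∧ i ∉ α := by
  simp [coverSetOn]

lemma isCoverOn_coverSetOn_iff (hαF : α ⊆ F) :
    IsCoverOn n E F (coverSetOn n F α) ↔ ∀ i ∈ F, ∀ j ∈ F, E i j → j ∈ α → i ∈ α := by
  simp only [IsCoverOn, inl_mem_coverSetOn, inr_mem_coverSetOn]
  constructor
  · rintro ⟨-, hcov⟩ i hi j hj hij hjα
    exact (hcov i hi j hj hij).resolve_right fun h => h.2 hjα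
  · refine fun hcl => ⟨?_, fun i hi j hj hij => ?_⟩
    · rintro (k | k) hk
      · exact hαF (inl_mem_coverSetOn.1 hk)
      · exact (inr_mem_coverSetOn.1 hk).1
    · by_cases hjα : j ∈ α
      · exact Or.inl (hcl i hi j hj hij hjα)
      · exact Or.inr ⟨hj, hjα⟩

lemma not_isCoverOn_of_ssubset_coverSetOn (ha : ∀ i, E i i) (hαF : α ⊆ F)
    {D : Set (Fin n ⊕ Fin n)} (hD : D ⊂ coverSetOn n F α) : ¬ IsCoverOn n E F D := by
  rintro ⟨-, hcov⟩
  obtain ⟨v, hvC, hvD⟩ := Set.exists_of_ssubset hD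
  -- the loop at the index of the missing vertex `v` is left uncovered
  rcases v with k | k
  · have hk : k ∈ α := inl_mem_coverSetOn.1 hvC
    rcases hcov k (hαF hk) k (hαF hk) (ha k) with h | h
    · exact hvD h
    · exact (inr_mem_coverSetOn.1 (hD.subset h)).2 hk
  · obtain ⟨hkF, hkα⟩ := inr_mem_coverSetOn.1 hvC
    rcases hcov k hkF k hkF (ha k) with h | h
    · exact hkα (inl_mem_coverSetOn.1 (hD.subset h))
    · exact hvD h

lemma mem_LGF_iff (ha : ∀ i, E i i) :
    α ∈ LGF n E F ↔ α ⊆ F ∧ ∀ i ∈ F, ∀ j ∈ F, E i j → j ∈ α → i ∈ α :=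
  ⟨fun ⟨hαF, hcov, _⟩ => ⟨hαF, (isCoverOn_coverSetOn_iff hαF).1 hcov⟩,
    fun ⟨hαF, hcl⟩ => ⟨hαF, (isCoverOn_coverSetOn_iff hαF).2 hcl,
      fun _ hD => not_isCoverOn_of_ssubset_coverSetOn ha hαF hD⟩⟩

lemma mem_LGF_univ_iff (ha : ∀ i, E i i) {β : Set (Fin n)} :
    β ∈ LGF n E Set.univ ↔ IsDownClosed E β := by
  simp [mem_LGF_iff ha, IsDownClosed]

lemma sUnion_mem_LGF_univ (ha : ∀ i, E i i) {𝒮 : Set (Set (Fin n))}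
    (h𝒮 : 𝒮 ⊆ LGF n E Set.univ) : ⋃₀ 𝒮 ∈ LGF n E Set.univ :=
  (mem_LGF_univ_iff ha).2 <| isDownClosed_sUnion fun _ hs => (mem_LGF_univ_iff ha).1 (h𝒮 hs)

lemma mem_LGF_iff_exists_union_mem (ha : ∀ i, E i i) [IsTrans (Fin n) E] :
    α ∈ LGF n E F ↔ α ⊆ F ∧ ∃ γ ⊆ Fᶜ, α ∪ γ ∈ LGF n E Set.univ := by
  simp only [mem_LGF_univ_iff ha, mem_LGF_iff ha]
  refine and_congr_right fun hαF => ⟨fun hcl => ?_, ?_⟩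
  · -- add every index outside `F` lying below some element of `α`
    refine ⟨{i | i ∈ Fᶜ ∧ ∃ j ∈ α, E i j}, fun i hi => hi.1, fun i j hij hj => ?_⟩
    obtain ⟨k, hk, hik⟩ : ∃ k ∈ α, E i k := by
      rcases hj with hj | ⟨-, k, hk, hjk⟩
      exacts [⟨j, hj, hij⟩, ⟨k, hk, _root_.trans hij hjk⟩]
    by_cases hiF : i ∈ F
    · exact Or.inl (hcl i hiF k (hαF hk) hik hk)
    · exact Or.inr ⟨hiF, k, hk, hik⟩
  · rintro ⟨γ, hγ, hcl⟩ i hi j _ hij hj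
    exact (hcl hij (Or.inl hj)).resolve_right fun h => hγ h hi

end VertexCover

section UnionClosed

variable {ι : Type*} {L : Set (Set ι)} {F α α' : Set ι}

variable (L F) in
def largestExtension (α : Set ι) : Set ι := ⋃₀ {γ | γ ⊆ F ∧ α ∪ γ ∈ L}

lemma largestExtension_subset : largestExtension L F α ⊆ F :=
  Set.sUnion_subset fun _ hγ => hγ.1

lemma subset_largestExtension {γ : Set ι} (hγF : γ ⊆ F) (hγ : α ∪ γ ∈ L) :
    γ ⊆ largestExtension L F α :=
  Set.subset_sUnion_of_mem ⟨hγF, hγ⟩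

lemma union_largestExtension_mem (hL : ∀ 𝒮 ⊆ L, ⋃₀ 𝒮 ∈ L) (hα : ∃ γ ⊆ F, α ∪ γ ∈ L) :
    α ∪ largestExtension L F α ∈ L := by
  obtain ⟨γ₀, hγ₀⟩ := hα
  convert hL ((α ∪ ·) '' {γ | γ ⊆ F ∧ α ∪ γ ∈ L})
    (Set.image_subset_iff.2 fun γ hγ => hγ.2) using 1
  ext x
  simp only [largestExtension, Set.mem_union, Set.mem_sUnion, Set.sUnion_image, Set.mem_iUnion]
  constructor
  · rintro (hx | ⟨γ, hγ, hx⟩)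
    exacts [⟨γ₀, hγ₀, Or.inl hx⟩, ⟨γ, hγ, Or.inr hx⟩]
  · rintro ⟨γ, hγ, hx | hx⟩
    exacts [Or.inl hx, Or.inr ⟨γ, hγ, hx⟩]

lemma largestExtension_mono (hL : ∀ s ∈ L, ∀ t ∈ L, s ∪ t ∈ L) (h : α ⊆ α')
    (hα : α ∪ largestExtension L F α ∈ L) (hα' : α' ∪ largestExtension L F α' ∈ L) :
    largestExtension L F α ⊆ largestExtension L F α' := by
  have hunion : α' ∪ (largestExtension L F α ∪ largestExtension L F α') ∈ L := by
    convert hL _ hα _ hα' using 1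
    ext x
    have := @h x
    simp only [Set.mem_union]
    tauto
  exact (Set.union_subset_iff.1 (subset_largestExtension
    (Set.union_subset largestExtension_subset largestExtension_subset) hunion)).1

lemma union_largestExtension_inter_compl (hα : α ⊆ Fᶜ) :
    (α ∪ largestExtension L F α) ∩ Fᶜ = α := by
  rw [Set.union_inter_distrib_right, Set.inter_eq_left.2 hα,
    (Set.disjoint_compl_right_iff_subset.2 largestExtension_subset).inter_eq, Set.union_empty]

lemma union_largestExtension_subset_iff (hL : ∀ s ∈ L, ∀ t ∈ L, s ∪ t ∈ L)
    (hαF : α ⊆ Fᶜ) (hα'F : α' ⊆ Fᶜ) (hα : α ∪ largestExtension L F α ∈ L)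
    (hα' : α' ∪ largestExtension L F α' ∈ L) :
    α ∪ largestExtension L F α ⊆ α' ∪ largestExtension L F α' ↔ α ⊆ α' := by
  refine ⟨fun h => ?_, fun h => Set.union_subset_union h (largestExtension_mono hL h hα hα')⟩
  simpa only [union_largestExtension_inter_compl hαF, union_largestExtension_inter_compl hα'F]
    using Set.inter_subset_inter_left Fᶜ h

end UnionClosed

section UpperNeighbour

variable {n : ℕ} {L : Set (Set (Fin n))} {F : Set (Fin n)}

lemma exists_isUpperNeighbour_subset {β γ : Set (Fin n)} (hγ : γ ∈ L) (h : β ⊂ γ) :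
    ∃ a, IsUpperNeighbour n L β a ∧ a ⊆ γ := by
  obtain ⟨a, ⟨haL, hβa, haγ⟩, hmin⟩ :=
    (Set.toFinite {a | a ∈ L ∧ β ⊂ a ∧ a ⊆ γ}).exists_minimal ⟨γ, hγ, h, subset_rfl⟩
  exact ⟨a, ⟨haL, hβa, fun c hc ⟨hβc, hca⟩ =>
    hca.not_subset (hmin ⟨hc, hβc, hca.subset.trans haγ⟩ hca.subset)⟩, haγ⟩

lemma not_isUpperNeighbour_union_largestExtension {α A : Set (Fin n)} (hA : A ⊆ F) :
    ¬ IsUpperNeighbour n L (α ∪ largestExtension L F α) (α ∪ largestExtension L F α ∪ A) := by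
  rintro ⟨hmem, hlt, -⟩
  have hAδ : A ⊆ largestExtension L F α :=
    (Set.union_subset_iff.1 (subset_largestExtension (Set.union_subset largestExtension_subset hA)
      (by rwa [← Set.union_assoc]))).2
  exact hlt.ne (Set.union_eq_left.2 (hAδ.trans Set.subset_union_right)).symm

lemma inter_compl_union_largestExtension_eq (hL : ∀ 𝒮 ⊆ L, ⋃₀ 𝒮 ∈ L) {β : Set (Fin n)}
    (hβ : β ∈ L) (hS : ∀ A ⊆ F, A.Nonempty → ¬ IsUpperNeighbour n L β (β ∪ A)) :
    β ∩ Fᶜ ∪ largestExtension L F (β ∩ Fᶜ) = β := by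
  have hsplit : β ∩ Fᶜ ∪ β ∩ F = β := by rw [Set.union_comm, Set.inter_union_compl]
  have hβα : β ⊆ β ∩ Fᶜ ∪ largestExtension L F (β ∩ Fᶜ) := by
    conv_lhs => rw [← hsplit]
    exact Set.union_subset_union_right _
      (subset_largestExtension Set.inter_subset_right (by rwa [hsplit]))
  by_contra hne
  obtain ⟨a, ha, haα⟩ := exists_isUpperNeighbour_subset
    (union_largestExtension_mem hL ⟨β ∩ F, Set.inter_subset_right, by rwa [hsplit]⟩)
    (hβα.ssubset_of_ne (Ne.symm hne))
  refine hS (a \ β) (fun x hx => ?_) (Set.nonempty_of_ssubset ha.2.1)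
    (by rwa [Set.union_sdiff_cancel ha.2.1.subset])
  rcases haα hx.1 with h | h
  exacts [absurd h.1 hx.2, largestExtension_subset h]

lemma bijOn_union_largestExtension (hL : ∀ 𝒮 ⊆ L, ⋃₀ 𝒮 ∈ L) :
    Set.BijOn (fun α => α ∪ largestExtension L F α) {α | α ⊆ Fᶜ ∧ ∃ γ ⊆ F, α ∪ γ ∈ L}
      {β ∈ L | ∀ A ⊆ F, A.Nonempty → ¬ IsUpperNeighbour n L β (β ∪ A)} := by
  refine ⟨fun α hα => ⟨union_largestExtension_mem hL hα.2,
      fun A hA _ => not_isUpperNeighbour_union_largestExtension hA⟩,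
    fun α hα α' hα' h => ?_, fun β hβ => ⟨β ∩ Fᶜ, ⟨Set.inter_subset_right, β ∩ F,
      Set.inter_subset_right, by rw [Set.union_comm, Set.inter_union_compl]; exact hβ.1⟩,
      inter_compl_union_largestExtension_eq hL hβ.1 hβ.2⟩⟩
  rw [← union_largestExtension_inter_compl (L := L) hα.1, ← union_largestExtension_inter_compl hα'.1]
  exact congrArg (· ∩ Fᶜ) h

end UpperNeighbour

theorem stmt7_general (n : ℕ) (E : Fin n → Fin n → Prop)
    (ha : ∀ i, E i i)
    (hb : ∀ i j k : Fin n, i ≠ j → j ≠ k → i ≠ k → E i j → E j k → E i k)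
    (F : Set (Fin n)) :
    let LG := LGF n E Set.univ
    let LGc := LGF n E Fᶜ
    let δ : Set (Fin n) → Set (Fin n) :=
      fun α => ⋃₀ {γ | γ ⊆ F ∧ α ∪ γ ∈ LG}
    let S : Set (Set (Fin n)) :=
      {β ∈ LG | ∀ A ⊆ F, A.Nonempty → ¬ IsUpperNeighbour n LG β (β ∪ A)}
    let φ : Set (Fin n) → Set (Fin n) := fun α => α ∪ δ α
    Set.BijOn φ LGc S ∧ ∀ α ∈ LGc, ∀ α' ∈ LGc, (α ⊆ α' ↔ φ α ⊆ φ α') := by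
  intro LG LGc δ S φ
  have hLG : ∀ 𝒮 ⊆ LG, ⋃₀ 𝒮 ∈ LG := fun _ => sUnion_mem_LGF_univ ha
  have hLG₂ : ∀ s ∈ LG, ∀ t ∈ LG, s ∪ t ∈ LG := fun s hs t ht =>
    Set.sUnion_pair s t ▸ hLG _ (Set.pair_subset hs ht)
  have hLGc : LGc = {α | α ⊆ Fᶜ ∧ ∃ γ ⊆ F, α ∪ γ ∈ LG} := by
    have : IsTrans (Fin n) E := isTrans_of_refl_of_trans_of_ne ha hb
    ext α
    have hα := mem_LGF_iff_exists_union_mem ha (F := Fᶜ) (α := α)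
    rw [compl_compl] at hα
    exact hα
  rw [hLGc]
  exact ⟨bijOn_union_largestExtension hLG, fun α hα α' hα' =>
    (union_largestExtension_subset_iff hLG₂ hα.1 hα'.1 (union_largestExtension_mem hLG hα.2)
      (union_largestExtension_mem hLG hα'.2)).symm⟩

/-- Lemma 3.3: for `∅ ≠ F ⊊ [n]`, the map `φ(α) = α ∪ δ_α` is an order
isomorphism from `L_{G_F̄}` onto the set `S` of `β ∈ L_G` having no upper
neighbour of the form `β ∪ {p i : i ∈ A}` with `∅ ≠ A ⊆ F`. -/
theorem stmt7 (n : ℕ) (E : Fin n → Fin n → Prop)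
    (ha : ∀ i, E i i)
    (hb : ∀ i j k : Fin n, i ≠ j → j ≠ k → i ≠ k → E i j → E j k → E i k)
    (F : Set (Fin n)) (hF : F.Nonempty) (hFne : F ≠ Set.univ) :
    let LG := LGF n E Set.univ
    let LGc := LGF n E Fᶜ
    let δ : Set (Fin n) → Set (Fin n) :=
      fun α => ⋃₀ {γ | γ ⊆ F ∧ α ∪ γ ∈ LG}
    let S : Set (Set (Fin n)) :=
      {β ∈ LG | ∀ A ⊆ F, A.Nonempty → ¬ IsUpperNeighbour n LG β (β ∪ A)}
    let φ : Set (Fin n) → Set (Fin n) := fun α => α ∪ δ α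
    Set.BijOn φ LGc S ∧ ∀ α ∈ LGc, ∀ α' ∈ LGc, (α ⊆ α' ↔ φ α ⊆ φ α') :=
  stmt7_general n E ha hb F
end

section
/- Let G be a bipartite graph that comes from a finite poset P = {p_1,...,p_n} (i.e., E(G) = {{x_i, y_j} : p_i ≤ p_j in P}). Then for α ⊆ {p_1,...,p_n}, the set {x_k : p_k ∈ α} ∪ {y_k : p_k ∉ α} is a minimal vertex cover of G if and only if α is a poset ideal (down-set) of P. In particular, if P is an antichain, every subset α gives a minimal vertex cover, and the associated lattice L_G is the full Boolean lattice on {p_1,...,p_n}. -/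
lemma mem_coverSetOn_inl (n : ℕ) (F α : Set (Fin n)) (i : Fin n) :
    Sum.inl i ∈ coverSetOn n F α ↔ i ∈ α := by
  simp [coverSetOn]

lemma mem_coverSetOn_inr (n : ℕ) (F α : Set (Fin n)) (i : Fin n) :
    Sum.inr i ∈ coverSetOn n F α ↔ i ∈ F \ α := by
  simp [coverSetOn]

/-- For the bipartite graph coming from a poset `P` on `{p₁,...,pₙ}`
(edges `{x i, y j}` for `p i ≤ p j`), the set
`{x k : p k ∈ α} ∪ {y k : p k ∉ α}` is a minimal vertex cover iff `α` is a
poset ideal (down-set) of `P`. In particular, if `P` is an antichain then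
every subset gives a minimal vertex cover, i.e. `L_G` is the full Boolean
lattice. -/
theorem stmt19 (n : ℕ) (le : Fin n → Fin n → Prop)
    (hrefl : ∀ i, le i i)
    (hantisymm : ∀ i j, le i j → le j i → i = j)
    (htrans : ∀ i j k, le i j → le j k → le i k) :
    (∀ α : Set (Fin n),
      IsMinCoverOn n le Set.univ (coverSetOn n Set.univ α) ↔
        ∀ i j : Fin n, le i j → j ∈ α → i ∈ α) ∧
    ((∀ i j, le i j → i = j) → LGF n le Set.univ = Set.univ) := by
  have key : ∀ α : Set (Fin n),
      IsMinCoverOn n le Set.univ (coverSetOn n Set.univ α) ↔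
        ∀ i j : Fin n, le i j → j ∈ α → i ∈ α := by
    intro α
    constructor
    · rintro ⟨⟨_, hc⟩, _⟩ i j hij hj
      rcases hc i trivial j trivial hij with h | h
      · exact (mem_coverSetOn_inl n _ α i).mp h
      · exact absurd ((mem_coverSetOn_inr n _ α j).mp h).2 (by exact fun h' => h' hj)
    · intro hdown
      have hcov : IsCoverOn n le Set.univ (coverSetOn n Set.univ α) := by
        refine ⟨fun v _ => ?_, fun i _ j _ hij => ?_⟩
        · cases v <;> simp
        · by_cases hj : j ∈ α
          · exact Or.inl ((mem_coverSetOn_inl n _ α i).mpr (hdown i j hij hj))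
          · exact Or.inr ((mem_coverSetOn_inr n _ α j).mpr ⟨trivial, hj⟩)
      refine ⟨hcov, fun D hD hDcov => ?_⟩
      obtain ⟨v, hvC, hvD⟩ := Set.exists_of_ssubset hD
      cases v with
      | inl i =>
        have hi : i ∈ α := (mem_coverSetOn_inl n _ α i).mp hvC
        rcases hDcov.2 i trivial i trivial (hrefl i) with h | h
        · exact hvD h
        · exact ((mem_coverSetOn_inr n _ α i).mp (hD.1 h)).2 hi
      | inr j =>
        have hj : j ∉ α := ((mem_coverSetOn_inr n _ α j).mp hvC).2
        rcases hDcov.2 j trivial j trivial (hrefl j) with h | h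
        · exact hj ((mem_coverSetOn_inl n _ α j).mp (hD.1 h))
        · exact hvD h
  refine ⟨key, fun hanti => ?_⟩
  ext α
  simp only [LGF, Set.mem_setOf_eq, Set.mem_univ, iff_true]
  exact ⟨fun _ _ => trivial, (key α).mpr fun i j hij hj => hanti i j hij ▸ hj⟩
end
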